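/- Every solution y of the homogeneous equation y_t = Σ_{i=1}^p φ_i(t) y_{t−i} on ℤ_{≥ s−p+1} satisfies y_t = Σ_{m=1}^p ξ^{(m)}_{t,s} · y_{s−m+1} for all t ≥ s−p+1. -/

import Mathlib

/-- The `k × k` banded lower Hessenberg matrix `Φ^{(m)}_{t,s}` (here `k = t - s`),
0-indexed: superdiagonal entries are `-1`; first-column entries (row `i`, 0-indexed) are
`φ_{i+m}(s+i+1)` when `i + m ≤ p` and `0` otherwise; for columns `j ≥ 1` (0-indexed) the
`(i,j)` entry is `φ_{i-j+1}(s+i+1)` when `j ≤ i` and `i - j + 1 ≤ p`, and `0` otherwise. -/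
def Phi (p : ℕ) (φ : ℕ → ℤ → ℂ) (m : ℕ) (s : ℤ) (k : ℕ) :
    Matrix (Fin k) (Fin k) ℂ :=
  Matrix.of fun i j =>
    if (j : ℕ) = (i : ℕ) + 1 then -1
    else if (j : ℕ) = 0 then
      (if (i : ℕ) + m ≤ p then φ ((i : ℕ) + m) (s + (i : ℕ) + 1) else 0)
    else if (j : ℕ) ≤ (i : ℕ) then
      (if (i : ℕ) - (j : ℕ) + 1 ≤ p then φ ((i : ℕ) - (j : ℕ) + 1) (s + (i : ℕ) + 1)
        else 0)
    else 0

lemma phi_minor0 (p : ℕ) (φ : ℕ → ℤ → ℂ) (m : ℕ) (s : ℤ) (n : ℕ) :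
    (Phi p φ m s (n+2)).submatrix Fin.succ ((0 : Fin (n+2)).succAbove) =
      Phi p φ 1 (s+1) (n+1) := by
  ext i j
  have hi : ((i.succ : Fin (n+2)) : ℕ) = (i : ℕ) + 1 := rfl
  have hj : (((0 : Fin (n+2)).succAbove j : Fin (n+2)) : ℕ) = (j : ℕ) + 1 := by
    simp [Fin.succAbove]
  simp only [Matrix.submatrix_apply, Phi, Matrix.of_apply, hi, hj]
  split_ifs <;> first
    | rfl
    | omega
    | exact (‹False›).elim
    | (congr 1 <;> push_cast <;> omega)

lemma phi_minor1 (p : ℕ) (φ : ℕ → ℤ → ℂ) (m : ℕ) (s : ℤ) (n : ℕ) :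
    (Phi p φ m s (n+2)).submatrix Fin.succ ((1 : Fin (n+2)).succAbove) =
      Phi p φ (m+1) (s+1) (n+1) := by
  ext i j
  have hi : ((i.succ : Fin (n+2)) : ℕ) = (i : ℕ) + 1 := rfl
  have hj : (((1 : Fin (n+2)).succAbove j : Fin (n+2)) : ℕ)
      = if (j : ℕ) < 1 then (j : ℕ) else (j : ℕ) + 1 := by
    simp only [Fin.succAbove, Fin.lt_def, Fin.coe_castSucc, Fin.val_succ, Fin.val_one]
    split_ifs <;> simp_all [Fin.lt_def] <;> omega
  simp only [Matrix.submatrix_apply, Phi, Matrix.of_apply, hi, hj]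
  split_ifs <;> first
    | rfl
    | omega
    | exact (‹False›).elim
    | (congr 1 <;> push_cast <;> omega)

lemma det_rec (p : ℕ) (φ : ℕ → ℤ → ℂ) (m : ℕ) (s : ℤ) (n : ℕ) :
    (Phi p φ m s (n+2)).det =
      (if m ≤ p then φ m (s+1) else 0) * (Phi p φ 1 (s+1) (n+1)).det
        + (Phi p φ (m+1) (s+1) (n+1)).det := by
  rw [show n + 2 = (n+1).succ from rfl, Matrix.det_succ_row_zero,
    Fin.sum_univ_succ, Fin.sum_univ_succ]
  have h0 : (Phi p φ m s (n+2)) 0 0 = (if m ≤ p then φ m (s+1) else 0) := by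
    simp [Phi]
  have h1 : (Phi p φ m s (n+2)) 0 ((0 : Fin (n+1)).succ) = -1 := by
    have : (((0 : Fin (n+1)).succ : Fin (n+2)) : ℕ) = 1 := rfl
    simp [Phi, this]
  have h2 : ∀ j : Fin n, (Phi p φ m s (n+2)) 0 (j.succ.succ) = 0 := by
    intro j
    have h3 : ((j.succ.succ : Fin (n+2)) : ℕ) = (j : ℕ) + 2 := rfl
    simp only [Phi, Matrix.of_apply, h3, Fin.val_zero]
    rw [if_neg (by omega), if_neg (by omega), if_neg (by omega)]
  rw [h0, h1]
  rw [Finset.sum_eq_zero (fun j _ => by rw [h2 j]; ring)]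
  have e0 : ((0 : Fin (n+1)).succ : Fin (n+2)) = 1 := rfl
  rw [phi_minor0, e0, phi_minor1]
  simp only [Fin.val_zero, Fin.val_one, pow_zero, pow_one]
  ring

/-- The fundamental solution `ξ^{(m)}_{t,s}`: the banded Hessenbergian
`det(Φ^{(m)}_{t,s})` for `t > s`; `1` for `t = s - m + 1`; `0` for other
`t ∈ [s - p + 1, s]`. -/
def xi (p : ℕ) (φ : ℕ → ℤ → ℂ) (m : ℕ) (s t : ℤ) : ℂ :=
  if s < t then (Phi p φ m s (t - s).toNat).det
  else if t = s - (m : ℤ) + 1 then 1 else 0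

lemma xi_le (p : ℕ) (φ : ℕ → ℤ → ℂ) (m : ℕ) (s t : ℤ) (h : t ≤ s) :
    xi p φ m s t = if t = s - (m : ℤ) + 1 then 1 else 0 := by
  rw [xi, if_neg (by omega)]

lemma det_one (p : ℕ) (φ : ℕ → ℤ → ℂ) (m : ℕ) (s : ℤ) :
    (Phi p φ m s 1).det = if m ≤ p then φ m (s+1) else 0 := by
  rw [Matrix.det_fin_one]
  simp [Phi]

lemma xi_gt (p : ℕ) (φ : ℕ → ℤ → ℂ) (m : ℕ) (s t : ℤ) (h : s < t) :
    xi p φ m s t = (Phi p φ m s (t - s).toNat).det := if_pos h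

lemma xi_shift (p : ℕ) (φ : ℕ → ℤ → ℂ) (m : ℕ) (hm : 1 ≤ m) (s t : ℤ) :
    xi p φ m s t = (if m ≤ p then φ m (s+1) else 0) * xi p φ 1 (s+1) t
      + xi p φ (m+1) (s+1) t := by
  rcases lt_trichotomy t (s+1) with h | h | h
  · have h1 : t ≤ s := by omega
    rw [xi_le _ _ _ _ _ h1, xi_le _ _ _ _ _ (by omega), xi_le _ _ _ _ _ (by omega)]
    push_cast
    split_ifs <;> first | ring1 | omega | (exfalso; omega)
  · have e : (t - s).toNat = 1 := by omega
    rw [xi_gt p φ m s t (by omega), e, det_one,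
      xi_le p φ 1 (s+1) t (by omega), xi_le p φ (m+1) (s+1) t (by omega)]
    push_cast
    split_ifs <;> first | ring1 | omega | (exfalso; omega)
  · obtain ⟨n, hn⟩ : ∃ n : ℕ, (t - s).toNat = n + 2 := ⟨(t - s).toNat - 2, by omega⟩
    have e1 : (t - (s+1)).toNat = n + 1 := by omega
    rw [xi_gt p φ m s t (by omega), hn, det_rec,
      xi_gt p φ 1 (s+1) t (by omega), e1,
      xi_gt p φ (m+1) (s+1) t (by omega), e1]

lemma xi_rec (p : ℕ) (φ : ℕ → ℤ → ℂ) : ∀ k : ℕ, 1 ≤ k → ∀ m : ℕ, 1 ≤ m → ∀ s : ℤ,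
    xi p φ m s (s + (k : ℤ)) =
      ∑ i ∈ Finset.Icc 1 p, φ i (s + (k : ℤ)) * xi p φ m s (s + (k : ℤ) - (i : ℤ)) := by
  intro k hk
  induction k, hk using Nat.le_induction with
  | base =>
    intro m hm s
    have e : ((s + ((1:ℕ):ℤ)) - s).toNat = 1 := by push_cast; omega
    rw [xi_gt p φ m s _ (by push_cast; omega), e, det_one]
    have hterm : ∀ i ∈ Finset.Icc 1 p,
        φ i (s + ((1:ℕ):ℤ)) * xi p φ m s (s + ((1:ℕ):ℤ) - (i : ℤ))
          = if i = m then φ m (s+1) else 0 := by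
      intro i hi
      simp only [Finset.mem_Icc] at hi
      rw [xi_le _ _ _ _ _ (by push_cast; omega)]
      by_cases him : i = m
      · subst him
        rw [if_pos (by push_cast; omega), if_pos rfl, mul_one]
        norm_num
      · rw [if_neg (by push_cast; omega), if_neg him, mul_zero]
    rw [Finset.sum_congr rfl hterm, Finset.sum_ite_eq' (Finset.Icc 1 p) m
      (fun _ => φ m (s+1))]
    simp only [Finset.mem_Icc]
    split_ifs <;> first | rfl | omega
  | succ k hk ih =>
    intro m hm s
    have hs : (s : ℤ) + ((k+1 : ℕ) : ℤ) = s + 1 + (k : ℤ) := by push_cast; ring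
    rw [hs, xi_shift p φ m hm s (s + 1 + (k:ℤ)), ih 1 le_rfl (s+1),
      ih (m+1) (by omega) (s+1), Finset.mul_sum, ← Finset.sum_add_distrib]
    refine Finset.sum_congr rfl fun i hi => ?_
    rw [xi_shift p φ m hm s (s + 1 + (k:ℤ) - (i:ℤ))]
    ring

lemma xi_rec' (p : ℕ) (φ : ℕ → ℤ → ℂ) (m : ℕ) (hm : 1 ≤ m) (s t : ℤ) (ht : s < t) :
    xi p φ m s t = ∑ i ∈ Finset.Icc 1 p, φ i t * xi p φ m s (t - (i : ℤ)) := by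
  have e : s + (((t - s).toNat : ℕ) : ℤ) = t := by omega
  have := xi_rec p φ (t - s).toNat (by omega) m hm s
  rw [e] at this
  exact this

/-- Every solution `y` of the homogeneous equation `y_t = Σ_{i=1}^p φ_i(t) y_{t-i}` on
`ℤ_{≥ s-p+1}` satisfies `y_t = Σ_{m=1}^p ξ^{(m)}_{t,s} y_{s-m+1}` for all
`t ≥ s - p + 1`. -/
theorem stmt13 (p : ℕ) (hp : 1 ≤ p) (φ : ℕ → ℤ → ℂ) (s : ℤ) (y : ℤ → ℂ)
    (hy : ∀ t : ℤ, s < t → y t = ∑ i ∈ Finset.Icc 1 p, φ i t * y (t - (i : ℤ))) :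
    ∀ t : ℤ, s - (p : ℤ) + 1 ≤ t →
      y t = ∑ m ∈ Finset.Icc 1 p, xi p φ m s t * y (s - (m : ℤ) + 1) := by
  have key : ∀ n : ℕ, ∀ t : ℤ, s - (p : ℤ) + 1 ≤ t → t = s - (p : ℤ) + 1 + n →
      y t = ∑ m ∈ Finset.Icc 1 p, xi p φ m s t * y (s - (m : ℤ) + 1) := by
    intro n
    induction n using Nat.strong_induction_on with
    | _ n ih =>
      intro t ht hteq
      by_cases hts : s < t
      · rw [hy t hts]
        have hrec : ∀ i ∈ Finset.Icc 1 p, y (t - (i:ℤ)) =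
            ∑ m ∈ Finset.Icc 1 p, xi p φ m s (t - (i:ℤ)) * y (s - (m : ℤ) + 1) := by
          intro i hi
          simp only [Finset.mem_Icc] at hi
          exact ih (n - i) (by omega) (t - i) (by omega) (by omega)
        calc ∑ i ∈ Finset.Icc 1 p, φ i t * y (t - (i:ℤ))
            = ∑ i ∈ Finset.Icc 1 p, ∑ m ∈ Finset.Icc 1 p,
                φ i t * (xi p φ m s (t - (i:ℤ)) * y (s - (m : ℤ) + 1)) := by
              refine Finset.sum_congr rfl fun i hi => ?_
              rw [hrec i hi, Finset.mul_sum]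
          _ = ∑ m ∈ Finset.Icc 1 p, ∑ i ∈ Finset.Icc 1 p,
                φ i t * (xi p φ m s (t - (i:ℤ)) * y (s - (m : ℤ) + 1)) :=
              Finset.sum_comm
          _ = ∑ m ∈ Finset.Icc 1 p, xi p φ m s t * y (s - (m : ℤ) + 1) := by
              refine Finset.sum_congr rfl fun m hm => ?_
              simp only [Finset.mem_Icc] at hm
              rw [xi_rec' p φ m hm.1 s t hts, Finset.sum_mul]
              exact Finset.sum_congr rfl fun i hi => by ring
      · push_neg at hts
        have hm0mem : (s + 1 - t).toNat ∈ Finset.Icc 1 p := by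
          simp only [Finset.mem_Icc]; omega
        rw [Finset.sum_eq_single_of_mem _ hm0mem ?_]
        · rw [xi_le _ _ _ _ _ hts, if_pos (by omega), one_mul]
          congr 1
          omega
        · intro b hb hbne
          simp only [Finset.mem_Icc] at hb
          rw [xi_le _ _ _ _ _ hts, if_neg (by omega), zero_mul]
  intro t ht
  exact key (t - (s - (p:ℤ) + 1)).toNat t ht (by omega)
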